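/- arXiv:2503.23548 — 2 statements merged into one kernel-verified Lean document; each statement's English description precedes it below -/
import Mathlib

section
/- Let A, B be nonempty closed subsets of a uniformly convex Banach space X with dist(A,B) = 0, and T a p-cyclic φ-contraction mapping. Then T has a unique coupled fixed point (x,y) ∈ A × B, i.e., T(x,y) = x and T(y,x) = y; moreover for any (x₀,y₀) ∈ A × B the iterates x_n = T(x_{n-1}, y_{n-1}) and y_n = T(y_{n-1}, x_{n-1}) satisfy x_n → x and y_n → y. -/
open Filter Topology

/-- `setDist A B = inf {‖a - b‖ : a ∈ A, b ∈ B}`. -/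
noncomputable def setDist {X : Type*} [NormedAddCommGroup X] (A B : Set X) : ℝ :=
  sInf {d : ℝ | ∃ a ∈ A, ∃ b ∈ B, d = ‖a - b‖}

/-!
Coupled fixed points of `T` are the fixed points of `S (x, y) = (T x y, T y x)`, which is a cyclic
φ-contraction from `A × B` to `B × A` for the max metric. For such a map the consecutive distances
of an orbit decrease to `0`, since each step removes at least `φ δ - φ 0` while they exceed `δ`.
Two orbit points an odd number of steps apart lie in opposite sets, so their distance is contracted
too; once two consecutive steps from `zₙ` are small compared with `ε` and `φ (ε / 2) - φ 0`, this
keeps `dist (zₙ₊₂ₖ₊₁, zₙ)` below `ε` for all `k` by induction on `k`, and the orbit is Cauchy. Its limit lies in both closed sets, hence is fixed, and the contraction between the two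
sets makes the fixed point unique.
-/

open Set Function

section PhiContraction

variable {φ : ℝ → ℝ}

lemma apply_zero_le_of_strictMonoOn (hφ : StrictMonoOn φ (Ici 0)) {t : ℝ} (ht : 0 ≤ t) :
    φ 0 ≤ φ t :=
  hφ.monotoneOn self_mem_Ici ht ht

lemma apply_zero_lt_of_strictMonoOn (hφ : StrictMonoOn φ (Ici 0)) {t : ℝ} (ht : 0 < t) :
    φ 0 < φ t :=
  hφ self_mem_Ici ht.le ht

lemma tendsto_zero_of_le_sub_phi {d : ℕ → ℝ} (hφ : StrictMonoOn φ (Ici 0)) (hd0 : ∀ n, 0 ≤ d n)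
    (hd : ∀ n, d (n + 1) ≤ d n - φ (d n) + φ 0) : Tendsto d atTop (𝓝 0) := by
  have hanti : Antitone d := antitone_nat_of_succ_le fun n => by
    linarith [hd n, apply_zero_le_of_strictMonoOn hφ (hd0 n)]
  refine tendsto_order.2 ⟨fun a ha => Eventually.of_forall fun n => ha.trans_le (hd0 n),
    fun δ hδ => ?_⟩
  obtain ⟨N, hN⟩ : ∃ N, d N < δ := by
    by_contra! hlarge
    have hlin : ∀ n : ℕ, d n ≤ d 0 - n * (φ δ - φ 0) := by
      intro n
      induction n with
      | zero => simp
      | succ n ih =>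
        have := hφ.monotoneOn hδ.le (hd0 n) (hlarge n)
        push_cast
        linarith [hd n]
    obtain ⟨n, hn⟩ := exists_nat_gt (d 0 / (φ δ - φ 0))
    rw [div_lt_iff₀ (sub_pos.2 (apply_zero_lt_of_strictMonoOn hφ hδ))] at hn
    linarith [hlin n, hd0 n]
  exact eventually_atTop.2 ⟨N, fun n hn => (hanti hn).trans_lt hN⟩

end PhiContraction

/-- The term `φ 0` is the paper's `φ (dist(P, Q))` in the case `dist(P, Q) = 0`. -/
structure IsCyclicPhiContraction {α : Type*} [MetricSpace α] (P Q : Set α) (S : α → α)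
    (φ : ℝ → ℝ) : Prop where
  mapsTo_left : MapsTo S P Q
  mapsTo_right : MapsTo S Q P
  dist_le : ∀ u ∈ P, ∀ v ∈ Q, dist (S u) (S v) ≤ dist u v - φ (dist u v) + φ 0

namespace IsCyclicPhiContraction

variable {α : Type*} [MetricSpace α] {P Q : Set α} {S : α → α} {φ : ℝ → ℝ}
  (h : IsCyclicPhiContraction P Q S φ)
include h

lemma dist_le_of_mem {u v : α} (huv : u ∈ P ∧ v ∈ Q ∨ u ∈ Q ∧ v ∈ P) :
    dist (S u) (S v) ≤ dist u v - φ (dist u v) + φ 0 := by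
  rcases huv with ⟨hu, hv⟩ | ⟨hu, hv⟩
  · exact h.dist_le u hu v hv
  · simpa only [dist_comm] using h.dist_le v hv u hu

lemma dist_le_dist_of_mem (hφ : StrictMonoOn φ (Ici 0)) {u v : α}
    (huv : u ∈ P ∧ v ∈ Q ∨ u ∈ Q ∧ v ∈ P) : dist (S u) (S v) ≤ dist u v := by
  linarith [h.dist_le_of_mem huv, apply_zero_le_of_strictMonoOn hφ (dist_nonneg (x := u) (y := v))]

lemma iterate_mem {x : α} (hx : x ∈ P) :
    ∀ n, (Even n → S^[n] x ∈ P) ∧ (¬Even n → S^[n] x ∈ Q)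
  | 0 => ⟨fun _ => hx, fun h0 => (h0 (by decide)).elim⟩
  | n + 1 => by
    obtain ⟨hP, hQ⟩ := iterate_mem hx n
    rw [iterate_succ_apply', Nat.even_add_one]
    exact ⟨fun he => h.mapsTo_right (hQ he), fun ho => h.mapsTo_left (hP (not_not.1 ho))⟩

lemma iterate_mem_union {x : α} (hx : x ∈ P) (n : ℕ) : S^[n] x ∈ P ∪ Q := by
  by_cases hn : Even n
  · exact Or.inl ((h.iterate_mem hx n).1 hn)
  · exact Or.inr ((h.iterate_mem hx n).2 hn)

lemma iterate_mem_of_odd_add {x : α} (hx : x ∈ P) {m n : ℕ} (hmn : Odd (m + n)) :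
    S^[m] x ∈ P ∧ S^[n] x ∈ Q ∨ S^[m] x ∈ Q ∧ S^[n] x ∈ P := by
  rw [← Nat.not_even_iff_odd, Nat.even_add] at hmn
  by_cases hm : Even m
  · exact Or.inl ⟨(h.iterate_mem hx m).1 hm, (h.iterate_mem hx n).2 fun hn => hmn (iff_of_true hm hn)⟩
  · exact Or.inr ⟨(h.iterate_mem hx m).2 hm,
      (h.iterate_mem hx n).1 (by_contra fun hn => hmn (iff_of_false hm hn))⟩

lemma dist_iterate_succ_le {x : α} (hx : x ∈ P) {m n : ℕ} (hmn : Odd (m + n)) :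
    dist (S^[m + 1] x) (S^[n + 1] x) ≤
      dist (S^[m] x) (S^[n] x) - φ (dist (S^[m] x) (S^[n] x)) + φ 0 := by
  simpa only [iterate_succ_apply'] using h.dist_le_of_mem (h.iterate_mem_of_odd_add hx hmn)

lemma dist_iterate_succ_le_dist (hφ : StrictMonoOn φ (Ici 0)) {x : α} (hx : x ∈ P) {m n : ℕ}
    (hmn : Odd (m + n)) : dist (S^[m + 1] x) (S^[n + 1] x) ≤ dist (S^[m] x) (S^[n] x) := by
  simpa only [iterate_succ_apply'] using
    h.dist_le_dist_of_mem hφ (h.iterate_mem_of_odd_add hx hmn)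

lemma dist_iterate_add_two_mul_add_one_le (hφ : StrictMonoOn φ (Ici 0)) {x : α} (hx : x ∈ P)
    {ε : ℝ} {n : ℕ} (hsmall : dist (S^[n + 1] x) (S^[n] x) + dist (S^[n + 2] x) (S^[n + 1] x) ≤
      min (ε / 2) (φ (ε / 2) - φ 0)) (hε : 0 < ε) :
    ∀ k, dist (S^[n + 2 * k + 1] x) (S^[n] x) ≤ ε
  | 0 => by
    have := dist_nonneg (x := S^[n + 2] x) (y := S^[n + 1] x)
    linarith [min_le_left (ε / 2) (φ (ε / 2) - φ 0)]
  | k + 1 => by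
    set u := dist (S^[n + 2 * k + 1] x) (S^[n] x)
    have hu := dist_iterate_add_two_mul_add_one_le hφ hx hsmall hε k
    have h₁ : dist (S^[n + 2 * k + 2] x) (S^[n + 1] x) ≤ u - φ u + φ 0 :=
      h.dist_iterate_succ_le hx ⟨n + k, by ring⟩
    have h₂ : dist (S^[n + 2 * k + 3] x) (S^[n + 2] x) ≤ dist (S^[n + 2 * k + 2] x) (S^[n + 1] x) :=
      h.dist_iterate_succ_le_dist hφ hx ⟨n + k + 1, by ring⟩
    have htri := dist_triangle4 (S^[n + 2 * k + 3] x) (S^[n + 2] x) (S^[n + 1] x) (S^[n] x)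
    rw [show n + 2 * (k + 1) + 1 = n + 2 * k + 3 by ring]
    rcases le_or_gt u (ε / 2) with hu' | hu'
    · linarith [min_le_left (ε / 2) (φ (ε / 2) - φ 0),
        apply_zero_le_of_strictMonoOn hφ (dist_nonneg (x := S^[n + 2 * k + 1] x) (y := S^[n] x))]
    · linarith [min_le_right (ε / 2) (φ (ε / 2) - φ 0),
        hφ.monotoneOn (half_pos hε).le dist_nonneg hu'.le]

lemma cauchySeq_iterate (hφ : StrictMonoOn φ (Ici 0)) {x : α} (hx : x ∈ P) :
    CauchySeq fun n => S^[n] x := by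
  set d : ℕ → ℝ := fun n => dist (S^[n + 1] x) (S^[n] x)
  have hd : Tendsto d atTop (𝓝 0) :=
    tendsto_zero_of_le_sub_phi hφ (fun n => dist_nonneg) fun n =>
      h.dist_iterate_succ_le hx ⟨n, by ring⟩
  have hsum : Tendsto (fun n => d n + d (n + 1)) atTop (𝓝 0) := by
    simpa using hd.add (hd.comp (tendsto_add_atTop_nat 1))
  rw [Metric.cauchySeq_iff']
  intro ε hε
  have hη : 0 < min (ε / 4) (φ (ε / 4) - φ 0) :=
    lt_min (by linarith) (sub_pos.2 (apply_zero_lt_of_strictMonoOn hφ (by linarith)))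
  obtain ⟨N, hN⟩ := eventually_atTop.1 (hsum.eventually (ge_mem_nhds hη))
  have hgap := h.dist_iterate_add_two_mul_add_one_le hφ hx (ε := ε / 2) (n := N)
    (by rw [show ε / 2 / 2 = ε / 4 by ring]; exact hN N le_rfl) (half_pos hε)
  refine ⟨N, fun n hn => ?_⟩
  have hdn : d n ≤ ε / 4 := by
    linarith [hN n hn, min_le_left (ε / 4) (φ (ε / 4) - φ 0), dist_nonneg (x := S^[n + 2] x)
      (y := S^[n + 1] x)]
  rcases Nat.even_or_odd (n - N) with ⟨k, hk⟩ | ⟨k, hk⟩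
  · have hgapk := hgap k
    rw [show N + 2 * k + 1 = n + 1 by omega] at hgapk
    linarith [dist_triangle (S^[n] x) (S^[n + 1] x) (S^[N] x), dist_comm (S^[n] x) (S^[n + 1] x)]
  · have hgapk := hgap k
    rw [show N + 2 * k + 1 = n by omega] at hgapk
    linarith

theorem exists_isFixedPt_tendsto_iterate [CompleteSpace α] (hφ : StrictMonoOn φ (Ici 0))
    (hP : IsClosed P) (hQ : IsClosed Q) {x : α} (hx : x ∈ P) :
    ∃ w ∈ P ∩ Q, IsFixedPt S w ∧ Tendsto (fun n => S^[n] x) atTop (𝓝 w) := by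
  obtain ⟨w, hw⟩ := cauchySeq_tendsto_of_complete (h.cauchySeq_iterate hφ hx)
  have hwP : w ∈ P :=
    hP.mem_of_tendsto (hw.comp (strictMono_mul_left_of_pos two_pos).tendsto_atTop)
      (Eventually.of_forall fun n => (h.iterate_mem hx (2 * n)).1 (even_two_mul n))
  have hwQ : w ∈ Q :=
    hQ.mem_of_tendsto (hw.comp ((tendsto_add_atTop_nat 1).comp
        (strictMono_mul_left_of_pos two_pos).tendsto_atTop))
      (Eventually.of_forall fun n =>
        (h.iterate_mem hx (2 * n + 1)).2 (Nat.not_even_iff_odd.2 (odd_two_mul_add_one n)))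
  have hSw : Tendsto (fun n => S^[n + 1] x) atTop (𝓝 (S w)) := by
    refine tendsto_iff_dist_tendsto_zero.2 (squeeze_zero (fun n => dist_nonneg) (fun n => ?_)
      (tendsto_iff_dist_tendsto_zero.1 hw))
    rw [iterate_succ_apply']
    rcases h.iterate_mem_union hx n with hn | hn
    · exact h.dist_le_dist_of_mem hφ (Or.inl ⟨hn, hwQ⟩)
    · exact h.dist_le_dist_of_mem hφ (Or.inr ⟨hn, hwP⟩)
  exact ⟨w, ⟨hwP, hwQ⟩, tendsto_nhds_unique hSw (hw.comp (tendsto_add_atTop_nat 1)), hw⟩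

lemma eq_of_isFixedPt (hφ : StrictMonoOn φ (Ici 0)) {u v : α} (hu : u ∈ P) (hv : v ∈ Q)
    (hSu : IsFixedPt S u) (hSv : IsFixedPt S v) : u = v := by
  by_contra hne
  have := h.dist_le u hu v hv
  rw [hSu.eq, hSv.eq] at this
  linarith [apply_zero_lt_of_strictMonoOn hφ (dist_pos.2 hne)]

theorem exists_isFixedPt_forall_tendsto_iterate [CompleteSpace α] (hφ : StrictMonoOn φ (Ici 0))
    (hP : IsClosed P) (hQ : IsClosed Q) (hPne : P.Nonempty) :
    ∃ w ∈ P ∩ Q, IsFixedPt S w ∧ ∀ x ∈ P, Tendsto (fun n => S^[n] x) atTop (𝓝 w) := by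
  obtain ⟨x₀, hx₀⟩ := hPne
  obtain ⟨w, hw, hSw, -⟩ := h.exists_isFixedPt_tendsto_iterate hφ hP hQ hx₀
  refine ⟨w, hw, hSw, fun x hx => ?_⟩
  obtain ⟨w', hw', hSw', hlim⟩ := h.exists_isFixedPt_tendsto_iterate hφ hP hQ hx
  rwa [h.eq_of_isFixedPt hφ hw'.1 hw.2 hSw' hSw] at hlim

end IsCyclicPhiContraction

def coupledMap {α : Type*} (T : α → α → α) (p : α × α) : α × α := (T p.1 p.2, T p.2 p.1)

lemma iterate_coupledMap {α : Type*} {T : α → α → α} {x y : ℕ → α} (hx : ∀ n, x (n + 1) = T (x n) (y n))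
    (hy : ∀ n, y (n + 1) = T (y n) (x n)) (n : ℕ) : (coupledMap T)^[n] (x 0, y 0) = (x n, y n) := by
  induction n with
  | zero => rfl
  | succ n ih => rw [iterate_succ_apply', ih, hx, hy]; rfl

lemma isCyclicPhiContraction_coupledMap {α : Type*} [MetricSpace α] {A B : Set α} {T : α → α → α} {φ : ℝ → ℝ}
    (hTB : ∀ x ∈ A, ∀ y ∈ B, T x y ∈ B) (hTA : ∀ x ∈ B, ∀ y ∈ A, T x y ∈ A)
    (hT : ∀ x₁ ∈ A, ∀ y₁ ∈ B, ∀ x₂ ∈ B, ∀ y₂ ∈ A, dist (T x₁ y₁) (T x₂ y₂) ≤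
      dist (x₁, y₁) (x₂, y₂) - φ (dist (x₁, y₁) (x₂, y₂)) + φ 0) :
    IsCyclicPhiContraction (A ×ˢ B) (B ×ˢ A) (coupledMap T) φ where
  mapsTo_left _ hp := ⟨hTB _ hp.1 _ hp.2, hTA _ hp.2 _ hp.1⟩
  mapsTo_right _ hp := ⟨hTA _ hp.1 _ hp.2, hTB _ hp.2 _ hp.1⟩
  dist_le p hp q hq := by
    have hswap : dist (q.2, q.1) (p.2, p.1) = dist p q := by
      simp only [Prod.dist_eq, dist_comm, max_comm]
    rw [Prod.dist_eq]
    refine max_le (hT _ hp.1 _ hp.2 _ hq.1 _ hq.2) ?_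
    rw [dist_comm, ← hswap]
    exact hT _ hq.2 _ hq.1 _ hp.2 _ hp.1

theorem stmt7_general {X : Type*} [NormedAddCommGroup X] [CompleteSpace X]
    (A B : Set X) (hA : A.Nonempty) (hB : B.Nonempty)
    (T : X → X → X) (φ : ℝ → ℝ)
    (hφmono : StrictMonoOn φ (Set.Ici 0))
    (hTB : ∀ x ∈ A, ∀ y ∈ B, T x y ∈ B)
    (hTA : ∀ x ∈ B, ∀ y ∈ A, T x y ∈ A)
    (hT : ∀ x₁ ∈ A, ∀ y₁ ∈ B, ∀ x₂ ∈ B, ∀ y₂ ∈ A,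
      ‖T x₁ y₁ - T x₂ y₂‖ ≤ ‖((x₁, y₁) : X × X) - (x₂, y₂)‖
        - φ ‖((x₁, y₁) : X × X) - (x₂, y₂)‖ + φ (setDist A B))
    (hAcl : IsClosed A) (hBcl : IsClosed B) (hd : setDist A B = 0) :
    ∃ x' y', x' ∈ A ∧ y' ∈ B ∧ T x' y' = x' ∧ T y' x' = y' ∧
      (∀ x'' y'', x'' ∈ A → y'' ∈ B → T x'' y'' = x'' → T y'' x'' = y'' →
        x'' = x' ∧ y'' = y') ∧
      (∀ x y : ℕ → X, x 0 ∈ A → y 0 ∈ B →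
        (∀ n, x (n + 1) = T (x n) (y n)) → (∀ n, y (n + 1) = T (y n) (x n)) →
        Tendsto x atTop (𝓝 x') ∧ Tendsto y atTop (𝓝 y')) := by
  rw [hd] at hT
  have hS := isCyclicPhiContraction_coupledMap hTB hTA (by simpa only [dist_eq_norm] using hT)
  obtain ⟨w, hw, hSw, hlim⟩ := hS.exists_isFixedPt_forall_tendsto_iterate hφmono
    (hAcl.prod hBcl) (hBcl.prod hAcl) (hA.prod hB)
  refine ⟨w.1, w.2, hw.1.1, hw.1.2, congrArg Prod.fst hSw, congrArg Prod.snd hSw, ?_, ?_⟩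
  · intro x y hx hy hTx hTy
    exact Prod.ext_iff.1 (hS.eq_of_isFixedPt hφmono (mk_mem_prod hx hy) hw.2 (Prod.ext hTx hTy) hSw)
  · intro x y hx₀ hy₀ hx hy
    have hxy := hlim _ (mk_mem_prod hx₀ hy₀)
    simp only [iterate_coupledMap hx hy] at hxy
    exact ⟨hxy.fst_nhds, hxy.snd_nhds⟩

theorem stmt7 {X : Type*} [NormedAddCommGroup X] [NormedSpace ℝ X] [UniformConvexSpace X] [CompleteSpace X]
    (A B : Set X) (hA : A.Nonempty) (hB : B.Nonempty)
    (T : X → X → X) (φ : ℝ → ℝ)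
    (hφmono : StrictMonoOn φ (Set.Ici 0)) (hφpos : ∀ t ≥ (0:ℝ), 0 ≤ φ t)
    (hTB : ∀ x ∈ A, ∀ y ∈ B, T x y ∈ B)
    (hTA : ∀ x ∈ B, ∀ y ∈ A, T x y ∈ A)
    (hT : ∀ x₁ ∈ A, ∀ y₁ ∈ B, ∀ x₂ ∈ B, ∀ y₂ ∈ A,
      ‖T x₁ y₁ - T x₂ y₂‖ ≤ ‖((x₁, y₁) : X × X) - (x₂, y₂)‖
        - φ ‖((x₁, y₁) : X × X) - (x₂, y₂)‖ + φ (setDist A B))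
    (hAcl : IsClosed A) (hBcl : IsClosed B) (hd : setDist A B = 0) :
    ∃ x' y', x' ∈ A ∧ y' ∈ B ∧ T x' y' = x' ∧ T y' x' = y' ∧
      (∀ x'' y'', x'' ∈ A → y'' ∈ B → T x'' y'' = x'' → T y'' x'' = y'' →
        x'' = x' ∧ y'' = y') ∧
      (∀ x y : ℕ → X, x 0 ∈ A → y 0 ∈ B →
        (∀ n, x (n + 1) = T (x n) (y n)) → (∀ n, y (n + 1) = T (y n) (x n)) →
        Tendsto x atTop (𝓝 x') ∧ Tendsto y atTop (𝓝 y')) :=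
  stmt7_general A B hA hB T φ hφmono hTB hTA hT hAcl hBcl hd
end

section
/- Let A, B be nonempty closed convex subsets of a uniformly convex Banach space X, and T a p-cyclic φ-contraction mapping. Let (x₀,y₀) ∈ A × B, x_n = T(x_{n-1}, y_{n-1}), y_n = T(y_{n-1}, x_{n-1}). Then {(x_{2n}, y_{2n})} is a Cauchy sequence in A × B and {(x_{2n+1}, y_{2n+1})} is a Cauchy sequence in B × A. -/
/-!
With `S (x, y) = (T (x, y), T (y, x))` the sequence is the orbit `S^[n] p` of `p = (x 0, y 0)`,
and `S` is a cyclic φ-contraction between `A × B` and `B × A` for the max norm. Along such an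
orbit the distances between consecutive points decrease to `d = dist(A, B)`: a limit `L > d`
would force `φ L ≤ φ d`. Uniform convexity gives property UC (two points of `A` that are
`(d + δ)`-close to a common point of `B` are `ε`-close), which passes to products. So consecutive
even iterates become close, an induction keeps `‖S^[2n] p - S^[2m+1] p‖ ≤ d + ε` for large
`n ≤ m`, and property UC once more makes the even iterates Cauchy. The odd iterates are the even
iterates of `S` started at `S p ∈ B × A`.
-/

open Filter Topology

open Set

lemma setDist_nonneg {X : Type*} [NormedAddCommGroup X] (A B : Set X) : 0 ≤ setDist A B :=
  Real.sInf_nonneg (by rintro _ ⟨a, -, b, -, rfl⟩; exact norm_nonneg _)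

lemma setDist_le_norm_sub {X : Type*} [NormedAddCommGroup X] {A B : Set X} {a b : X}
    (ha : a ∈ A) (hb : b ∈ B) : setDist A B ≤ ‖a - b‖ :=
  csInf_le ⟨0, by rintro _ ⟨a, -, b, -, rfl⟩; exact norm_nonneg _⟩ ⟨a, ha, b, hb, rfl⟩

section

variable {φ : ℝ → ℝ} {d : ℝ}

lemma sub_apply_add_apply_le_add (hφ : MonotoneOn φ (Ici 0)) (hd : 0 ≤ d) {ε t : ℝ}
    (hε : 0 ≤ ε) (hdt : d ≤ t) (ht : t ≤ d + ε + (φ (d + ε) - φ d)) :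
    t - φ t + φ d ≤ d + ε := by
  rcases le_total t (d + ε) with h | h
  · linarith [hφ hd (hd.trans hdt) hdt]
  · linarith [hφ (by positivity : (0 : ℝ) ≤ d + ε) (hd.trans hdt) h]

lemma tendsto_of_le_sub_apply_add_apply (hφ : StrictMonoOn φ (Ici 0)) (hd : 0 ≤ d)
    {c : ℕ → ℝ} (hdc : ∀ n, d ≤ c n) (hc : ∀ n, c (n + 1) ≤ c n - φ (c n) + φ d) :
    Tendsto c atTop (𝓝 d) := by
  have hφd : ∀ n, φ d ≤ φ (c n) := fun n => hφ.monotoneOn hd (hd.trans (hdc n)) (hdc n)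
  have hanti : Antitone c := antitone_nat_of_succ_le fun n => by linarith [hc n, hφd n]
  have hbdd : BddBelow (range c) := ⟨d, forall_mem_range.2 hdc⟩
  set L := ⨅ n, c n
  have hL : Tendsto c atTop (𝓝 L) := tendsto_atTop_ciInf hanti hbdd
  have hdL : d ≤ L := le_ciInf hdc
  have hLc : ∀ n, L ≤ c n := ciInf_le hbdd
  have hφL : ∀ n, φ L ≤ φ (c n) := fun n =>
    hφ.monotoneOn (hd.trans hdL) (hd.trans (hdc n)) (hLc n)
  have hlim : L ≤ L - φ L + φ d :=
    le_of_tendsto_of_tendsto' (hL.comp (tendsto_add_atTop_nat 1))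
      ((hL.sub_const (φ L)).add_const (φ d)) fun n => (hc n).trans (by linarith [hφL n])
  rwa [le_antisymm ((hφ.le_iff_le (hd.trans hdL) hd).1 (by linarith)) hdL] at hL

end

/-- Property UC of Suzuki–Kikkawa–Vetro in uniform `ε`–`δ` form, at the level `d`
(in applications `d = dist(C, D)`). -/
def HasPropertyUC {Y : Type*} [NormedAddCommGroup Y] (C D : Set Y) (d : ℝ) : Prop :=
  ∀ ε > 0, ∃ δ > 0, ∀ p ∈ C, ∀ q ∈ C, ∀ r ∈ D,
    ‖p - r‖ ≤ d + δ → ‖q - r‖ ≤ d + δ → ‖p - q‖ ≤ ε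

lemma HasPropertyUC.prod {Y₁ Y₂ : Type*} [NormedAddCommGroup Y₁] [NormedAddCommGroup Y₂]
    {C₁ D₁ : Set Y₁} {C₂ D₂ : Set Y₂} {d : ℝ} (h₁ : HasPropertyUC C₁ D₁ d)
    (h₂ : HasPropertyUC C₂ D₂ d) : HasPropertyUC (C₁ ×ˢ C₂) (D₁ ×ˢ D₂) d := by
  intro ε hε
  obtain ⟨δ₁, hδ₁, h₁⟩ := h₁ ε hε
  obtain ⟨δ₂, hδ₂, h₂⟩ := h₂ ε hε
  refine ⟨min δ₁ δ₂, lt_min hδ₁ hδ₂, fun p hp q hq r hr hpr hqr => ?_⟩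
  have hle₁ : d + min δ₁ δ₂ ≤ d + δ₁ := by gcongr; exact min_le_left _ _
  have hle₂ : d + min δ₁ δ₂ ≤ d + δ₂ := by gcongr; exact min_le_right _ _
  rw [norm_prod_le_iff] at hpr hqr ⊢
  exact ⟨h₁ _ hp.1 _ hq.1 _ hr.1 (hpr.1.trans hle₁) (hqr.1.trans hle₁),
    h₂ _ hp.2 _ hq.2 _ hr.2 (hpr.2.trans hle₂) (hqr.2.trans hle₂)⟩

section

variable {E : Type*} [NormedAddCommGroup E] [NormedSpace ℝ E] [UniformConvexSpace E]

lemma exists_forall_norm_add_le_mul_two_sub {ε M : ℝ} (hε : 0 < ε) (hM : 0 < M) :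
    ∃ δ > 0, ∀ R, 0 < R → R ≤ M → ∀ x y : E,
      ‖x‖ ≤ R → ‖y‖ ≤ R → ε ≤ ‖x - y‖ → ‖x + y‖ ≤ R * (2 - δ) := by
  obtain ⟨δ, hδ, h⟩ := exists_forall_closed_ball_dist_add_le_two_sub E (div_pos hε hM)
  refine ⟨δ, hδ, fun R hR hRM x y hx hy hxy => ?_⟩
  have hscale : ∀ z : E, ‖R⁻¹ • z‖ = ‖z‖ / R := fun z => by
    rw [norm_smul, norm_inv, Real.norm_of_nonneg hR.le, inv_mul_eq_div]
  have hsep : ε / M ≤ ‖R⁻¹ • x - R⁻¹ • y‖ := by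
    rw [← smul_sub, hscale]
    calc ε / M ≤ ε / R := div_le_div_of_nonneg_left hε.le hR hRM
      _ ≤ ‖x - y‖ / R := by gcongr
  have := h (by rw [hscale]; exact div_le_one_of_le₀ hx hR.le)
    (by rw [hscale]; exact div_le_one_of_le₀ hy hR.le) hsep
  rwa [← smul_add, hscale, div_le_iff₀ hR, mul_comm] at this

lemma Convex.hasPropertyUC {A B : Set E} (hA : Convex ℝ A) {d : ℝ} (hd : 0 ≤ d)
    (hAB : ∀ a ∈ A, ∀ b ∈ B, d ≤ ‖a - b‖) : HasPropertyUC A B d := by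
  intro ε hε
  rcases hd.eq_or_lt with rfl | hd
  · refine ⟨ε / 2, half_pos hε, fun p _ q _ r _ hpr hqr => ?_⟩
    have := dist_triangle_right p q r
    rw [dist_eq_norm, dist_eq_norm, dist_eq_norm] at this
    linarith
  obtain ⟨δ₁, hδ₁, huc⟩ :=
    exists_forall_norm_add_le_mul_two_sub (E := E) hε (by linarith : 0 < d + 1)
  have hδ : 0 < min 1 (d * δ₁ / 4) := lt_min one_pos (by positivity)
  refine ⟨min 1 (d * δ₁ / 4), hδ, fun p hp q hq r hr hpr hqr => ?_⟩
  by_contra! hpq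
  have hsum := huc _ (by positivity) (by linarith [min_le_left 1 (d * δ₁ / 4)]) _ _ hpr hqr
    (by rw [sub_sub_sub_cancel_right]; exact hpq.le)
  -- the midpoint of `p` and `q` lies in `A`, yet it is closer than `d` to `r`
  have hmid : d ≤ ‖(p - r) + (q - r)‖ / 2 := by
    calc d ≤ ‖(1 / 2 : ℝ) • p + (1 / 2 : ℝ) • q - r‖ :=
          hAB _ (hA hp hq (by norm_num) (by norm_num) (by norm_num)) r hr
      _ = ‖(1 / 2 : ℝ) • ((p - r) + (q - r))‖ := by congr 1; module
      _ = ‖(p - r) + (q - r)‖ / 2 := by rw [norm_smul]; norm_num; ring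
  nlinarith [min_le_right 1 (d * δ₁ / 4), mul_pos hδ hδ₁]

end

/-- `d` plays the role of `dist(C, D)`. -/
structure IsCyclicPhiContraction_s8 {Y : Type*} [NormedAddCommGroup Y] (S : Y → Y) (C D : Set Y)
    (φ : ℝ → ℝ) (d : ℝ) : Prop where
  mapsTo_left : MapsTo S C D
  mapsTo_right : MapsTo S D C
  nonneg : 0 ≤ d
  le_norm_sub : ∀ a ∈ C, ∀ b ∈ D, d ≤ ‖a - b‖
  norm_sub_le : ∀ a ∈ C, ∀ b ∈ D, ‖S a - S b‖ ≤ ‖a - b‖ - φ ‖a - b‖ + φ d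

namespace IsCyclicPhiContraction_s8

variable {Y : Type*} [NormedAddCommGroup Y] {S : Y → Y} {C D : Set Y} {φ : ℝ → ℝ} {d : ℝ}
  {p : Y}

theorem symm (h : IsCyclicPhiContraction_s8 S C D φ d) : IsCyclicPhiContraction_s8 S D C φ d where
  mapsTo_left := h.mapsTo_right
  mapsTo_right := h.mapsTo_left
  nonneg := h.nonneg
  le_norm_sub a ha b hb := by rw [norm_sub_rev]; exact h.le_norm_sub b hb a ha
  norm_sub_le a ha b hb := by rw [norm_sub_rev, norm_sub_rev a]; exact h.norm_sub_le b hb a ha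

theorem norm_sub_le_norm_sub (h : IsCyclicPhiContraction_s8 S C D φ d) (hφ : MonotoneOn φ (Ici 0))
    {a b : Y} (ha : a ∈ C) (hb : b ∈ D) : ‖S a - S b‖ ≤ ‖a - b‖ := by
  have hab := h.le_norm_sub a ha b hb
  linarith [h.norm_sub_le a ha b hb, hφ h.nonneg (h.nonneg.trans hab) hab]

theorem iterate_mem_union_s8 (h : IsCyclicPhiContraction_s8 S C D φ d) (hp : p ∈ C) (n : ℕ) :
    S^[n] p ∈ C ∪ D := by
  have hmaps : MapsTo S (C ∪ D) (C ∪ D) :=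
    union_comm D C ▸ h.mapsTo_left.union_union h.mapsTo_right
  exact hmaps.iterate n (Or.inl hp)

theorem iterate_two_mul_mem (h : IsCyclicPhiContraction_s8 S C D φ d) (hp : p ∈ C) (n : ℕ) :
    S^[2 * n] p ∈ C := by
  rw [Function.iterate_mul]
  exact (h.mapsTo_right.comp h.mapsTo_left).iterate n hp

theorem iterate_two_mul_add_one_mem (h : IsCyclicPhiContraction_s8 S C D φ d) (hp : p ∈ C)
    (n : ℕ) : S^[2 * n + 1] p ∈ D := by
  rw [Function.iterate_succ_apply']
  exact h.mapsTo_left (h.iterate_two_mul_mem hp n)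

theorem tendsto_norm_iterate_succ_sub (h : IsCyclicPhiContraction_s8 S C D φ d)
    (hφ : StrictMonoOn φ (Ici 0)) (hp : p ∈ C) :
    Tendsto (fun n => ‖S^[n + 1] p - S^[n] p‖) atTop (𝓝 d) := by
  have hstep : ∀ q ∈ C ∪ D, d ≤ ‖S q - q‖ ∧
      ‖S (S q) - S q‖ ≤ ‖S q - q‖ - φ ‖S q - q‖ + φ d := by
    rintro q (hq | hq)
    · exact ⟨h.symm.le_norm_sub _ (h.mapsTo_left hq) _ hq,
        h.symm.norm_sub_le _ (h.mapsTo_left hq) _ hq⟩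
    · exact ⟨h.le_norm_sub _ (h.mapsTo_right hq) _ hq,
        h.norm_sub_le _ (h.mapsTo_right hq) _ hq⟩
  refine tendsto_of_le_sub_apply_add_apply hφ h.nonneg (fun n => ?_) (fun n => ?_) <;>
    simp only [Function.iterate_succ_apply']
  exacts [(hstep _ (h.iterate_mem_union_s8 hp n)).1, (hstep _ (h.iterate_mem_union_s8 hp n)).2]

theorem exists_forall_ge_norm_iterate_succ_sub_le (h : IsCyclicPhiContraction_s8 S C D φ d)
    (hφ : StrictMonoOn φ (Ici 0)) (hp : p ∈ C) {ε : ℝ} (hε : 0 < ε) :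
    ∃ N, ∀ n ≥ N, ‖S^[n + 1] p - S^[n] p‖ ≤ d + ε :=
  eventually_atTop.1 <|
    (h.tendsto_norm_iterate_succ_sub hφ hp).eventually_le_const (lt_add_of_pos_right d hε)

theorem norm_apply_apply_sub_le (h : IsCyclicPhiContraction_s8 S C D φ d)
    (hφ : MonotoneOn φ (Ici 0)) {a b : Y} (ha : a ∈ C) (hb : b ∈ D) :
    ‖S (S a) - S (S b)‖ ≤ ‖a - b‖ - φ ‖a - b‖ + φ d :=
  (h.symm.norm_sub_le_norm_sub hφ (h.mapsTo_left ha) (h.mapsTo_right hb)).trans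
    (h.norm_sub_le a ha b hb)

theorem exists_forall_ge_norm_iterate_two_mul_add_two_sub_le
    (h : IsCyclicPhiContraction_s8 S C D φ d) (hφ : StrictMonoOn φ (Ici 0))
    (hUC : HasPropertyUC C D d) (hp : p ∈ C) {ε : ℝ} (hε : 0 < ε) :
    ∃ N, ∀ n ≥ N, ‖S^[2 * n + 2] p - S^[2 * n] p‖ ≤ ε := by
  obtain ⟨δ, hδ, hUCδ⟩ := hUC ε hε
  obtain ⟨N, hN⟩ := h.exists_forall_ge_norm_iterate_succ_sub_le hφ hp hδ
  refine ⟨N, fun n hn => hUCδ _ (h.iterate_two_mul_mem hp (n + 1)) _ (h.iterate_two_mul_mem hp n)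
    _ (h.iterate_two_mul_add_one_mem hp n) (hN (2 * n + 1) (by omega)) ?_⟩
  rw [norm_sub_rev]
  exact hN (2 * n) (by omega)

theorem exists_forall_norm_iterate_two_mul_sub_le (h : IsCyclicPhiContraction_s8 S C D φ d)
    (hφ : StrictMonoOn φ (Ici 0)) (hUC : HasPropertyUC C D d) (hp : p ∈ C) {ε : ℝ}
    (hε : 0 < ε) :
    ∃ N, ∀ m n, N < n → n ≤ m → ‖S^[2 * n] p - S^[2 * m + 1] p‖ ≤ d + ε := by
  have hγ : 0 < φ (d + ε) - φ d :=
    sub_pos.2 (hφ h.nonneg (show 0 ≤ d + ε by linarith [h.nonneg]) (by linarith))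
  obtain ⟨N₁, hN₁⟩ := h.exists_forall_ge_norm_iterate_succ_sub_le hφ hp hε
  obtain ⟨N₂, hN₂⟩ := h.exists_forall_ge_norm_iterate_two_mul_add_two_sub_le hφ hUC hp hγ
  have htwo : ∀ n, S^[n + 2] p = S (S (S^[n] p)) := fun n => by
    simp only [Function.iterate_succ_apply']
  refine ⟨max N₁ N₂, fun m => ?_⟩
  induction m with
  | zero => intro n hn h0; omega
  | succ m ih =>
    intro n hNn hnm
    rcases hnm.eq_or_lt with rfl | hnm
    · rw [norm_sub_rev]
      exact hN₁ _ (by omega)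
    obtain ⟨k, rfl⟩ : ∃ k, n = k + 1 := ⟨n - 1, by omega⟩
    have hCk := h.iterate_two_mul_mem hp k
    have hDm := h.iterate_two_mul_add_one_mem hp m
    -- Going back from `S^[2k+2] p` to `S^[2k] p` costs at most `φ (d + ε) - φ d`, which is
    -- what the next application of `S ∘ S` recovers as long as the distance exceeds `d + ε`.
    have hnext : ‖S^[2 * k + 2] p - S^[2 * m + 1] p‖ ≤ d + ε :=
      ih (k + 1) (by omega) (by omega)
    have hk : ‖S^[2 * k] p - S^[2 * m + 1] p‖ ≤ d + ε + (φ (d + ε) - φ d) := by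
      have := norm_sub_le_norm_sub_add_norm_sub (S^[2 * k] p) (S^[2 * k + 2] p) (S^[2 * m + 1] p)
      rw [norm_sub_rev (S^[2 * k] p) (S^[2 * k + 2] p)] at this
      linarith [hN₂ k (by omega)]
    have hstep := h.norm_apply_apply_sub_le hφ.monotoneOn hCk hDm
    rw [← htwo, ← htwo] at hstep
    exact hstep.trans (sub_apply_add_apply_le_add hφ.monotoneOn h.nonneg hε.le
      (h.le_norm_sub _ hCk _ hDm) hk)

theorem cauchySeq_iterate_two_mul (h : IsCyclicPhiContraction_s8 S C D φ d)
    (hφ : StrictMonoOn φ (Ici 0)) (hUC : HasPropertyUC C D d) (hp : p ∈ C) :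
    CauchySeq fun n => S^[2 * n] p := by
  refine Metric.cauchySeq_iff'.2 fun ε hε => ?_
  obtain ⟨δ, hδ, hUCδ⟩ := hUC (ε / 2) (half_pos hε)
  obtain ⟨N₁, hN₁⟩ := h.exists_forall_ge_norm_iterate_succ_sub_le hφ hp hδ
  obtain ⟨N₂, hN₂⟩ := h.exists_forall_norm_iterate_two_mul_sub_le hφ hUC hp hδ
  refine ⟨max N₁ N₂ + 1, fun n hn => ?_⟩
  have hn' : ‖S^[2 * n] p - S^[2 * n + 1] p‖ ≤ d + δ := by
    rw [norm_sub_rev]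
    exact hN₁ _ (by omega)
  rw [dist_eq_norm]
  linarith [hUCδ _ (h.iterate_two_mul_mem hp n) _ (h.iterate_two_mul_mem hp _) _
    (h.iterate_two_mul_add_one_mem hp n) hn' (hN₂ n _ (by omega) hn)]

end IsCyclicPhiContraction_s8

lemma isCyclicPhiContraction_prodMk_swap {X : Type*} [NormedAddCommGroup X] {A B : Set X}
    {T : X → X → X} {φ : ℝ → ℝ} {d : ℝ} (hd : 0 ≤ d)
    (hAB : ∀ a ∈ A, ∀ b ∈ B, d ≤ ‖a - b‖)
    (hTB : ∀ x ∈ A, ∀ y ∈ B, T x y ∈ B) (hTA : ∀ x ∈ B, ∀ y ∈ A, T x y ∈ A)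
    (hT : ∀ x₁ ∈ A, ∀ y₁ ∈ B, ∀ x₂ ∈ B, ∀ y₂ ∈ A,
      ‖T x₁ y₁ - T x₂ y₂‖ ≤ ‖((x₁, y₁) : X × X) - (x₂, y₂)‖
        - φ ‖((x₁, y₁) : X × X) - (x₂, y₂)‖ + φ d) :
    IsCyclicPhiContraction_s8 (fun p : X × X => (T p.1 p.2, T p.2 p.1)) (A ×ˢ B) (B ×ˢ A) φ d
    where
  mapsTo_left _ hp := ⟨hTB _ hp.1 _ hp.2, hTA _ hp.2 _ hp.1⟩
  mapsTo_right _ hp := ⟨hTA _ hp.1 _ hp.2, hTB _ hp.2 _ hp.1⟩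
  nonneg := hd
  le_norm_sub p hp q hq := (hAB _ hp.1 _ hq.1).trans (le_max_left _ _)
  norm_sub_le := by
    rintro ⟨a, b⟩ ⟨ha, hb⟩ ⟨b', a'⟩ ⟨hb', ha'⟩
    have hswap : ‖((a', b') : X × X) - (b, a)‖ = ‖((a, b) : X × X) - (b', a')‖ := by
      simp only [Prod.mk_sub_mk, Prod.norm_mk, norm_sub_rev a' b, norm_sub_rev b' a, max_comm]
    rw [norm_prod_le_iff]
    refine ⟨hT a ha b hb b' hb' a' ha', ?_⟩
    rw [← hswap]
    exact (norm_sub_rev _ _).trans_le (hT a' ha' b' hb' b hb a ha)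

theorem stmt8_general {X : Type*} [NormedAddCommGroup X] [NormedSpace ℝ X] [UniformConvexSpace X]
    (A B : Set X)
    (T : X → X → X) (φ : ℝ → ℝ)
    (hφmono : StrictMonoOn φ (Set.Ici 0))
    (hTB : ∀ x ∈ A, ∀ y ∈ B, T x y ∈ B)
    (hTA : ∀ x ∈ B, ∀ y ∈ A, T x y ∈ A)
    (hT : ∀ x₁ ∈ A, ∀ y₁ ∈ B, ∀ x₂ ∈ B, ∀ y₂ ∈ A,
      ‖T x₁ y₁ - T x₂ y₂‖ ≤ ‖((x₁, y₁) : X × X) - (x₂, y₂)‖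
        - φ ‖((x₁, y₁) : X × X) - (x₂, y₂)‖ + φ (setDist A B))
    (hAconv : Convex ℝ A) (hBconv : Convex ℝ B)
    (x y : ℕ → X) (hx0 : x 0 ∈ A) (hy0 : y 0 ∈ B)
    (hx : ∀ n, x (n + 1) = T (x n) (y n))
    (hy : ∀ n, y (n + 1) = T (y n) (x n)) :
    CauchySeq (fun n : ℕ => ((x (2 * n), y (2 * n)) : X × X)) ∧
      CauchySeq (fun n : ℕ => ((x (2 * n + 1), y (2 * n + 1)) : X × X)) := by
  have hAB : ∀ a ∈ A, ∀ b ∈ B, setDist A B ≤ ‖a - b‖ := fun _ ha _ hb =>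
    setDist_le_norm_sub ha hb
  have hBA : ∀ b ∈ B, ∀ a ∈ A, setDist A B ≤ ‖b - a‖ := fun b hb a ha =>
    norm_sub_rev a b ▸ hAB a ha b hb
  have hA := hAconv.hasPropertyUC (setDist_nonneg A B) hAB
  have hB := hBconv.hasPropertyUC (setDist_nonneg A B) hBA
  let S : X × X → X × X := fun p => (T p.1 p.2, T p.2 p.1)
  have hS : IsCyclicPhiContraction_s8 S (A ×ˢ B) (B ×ˢ A) φ (setDist A B) :=
    isCyclicPhiContraction_prodMk_swap (setDist_nonneg A B) hAB hTB hTA hT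
  have horbit : ∀ n, (x n, y n) = S^[n] (x 0, y 0) := by
    intro n
    induction n with
    | zero => rfl
    | succ n ih => rw [Function.iterate_succ_apply', ← ih, hx, hy]
  have hp : (x 0, y 0) ∈ A ×ˢ B := ⟨hx0, hy0⟩
  have heven : (fun n : ℕ => ((x (2 * n), y (2 * n)) : X × X)) = fun n => S^[2 * n] (x 0, y 0) :=
    funext fun n => horbit (2 * n)
  have hodd : (fun n : ℕ => ((x (2 * n + 1), y (2 * n + 1)) : X × X)) =
      fun n => S^[2 * n] (S (x 0, y 0)) :=
    funext fun n => (horbit (2 * n + 1)).trans (Function.iterate_succ_apply S _ _)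
  rw [heven, hodd]
  exact ⟨hS.cauchySeq_iterate_two_mul hφmono (hA.prod hB) hp,
    hS.symm.cauchySeq_iterate_two_mul hφmono (hB.prod hA) (hS.mapsTo_left hp)⟩

theorem stmt8 {X : Type*} [NormedAddCommGroup X] [NormedSpace ℝ X] [UniformConvexSpace X] [CompleteSpace X]
    (A B : Set X) (hA : A.Nonempty) (hB : B.Nonempty)
    (T : X → X → X) (φ : ℝ → ℝ)
    (hφmono : StrictMonoOn φ (Set.Ici 0)) (hφpos : ∀ t ≥ (0:ℝ), 0 ≤ φ t)
    (hTB : ∀ x ∈ A, ∀ y ∈ B, T x y ∈ B)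
    (hTA : ∀ x ∈ B, ∀ y ∈ A, T x y ∈ A)
    (hT : ∀ x₁ ∈ A, ∀ y₁ ∈ B, ∀ x₂ ∈ B, ∀ y₂ ∈ A,
      ‖T x₁ y₁ - T x₂ y₂‖ ≤ ‖((x₁, y₁) : X × X) - (x₂, y₂)‖
        - φ ‖((x₁, y₁) : X × X) - (x₂, y₂)‖ + φ (setDist A B))
    (hAcl : IsClosed A) (hBcl : IsClosed B) (hAconv : Convex ℝ A) (hBconv : Convex ℝ B)
    (x y : ℕ → X) (hx0 : x 0 ∈ A) (hy0 : y 0 ∈ B)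
    (hx : ∀ n, x (n + 1) = T (x n) (y n))
    (hy : ∀ n, y (n + 1) = T (y n) (x n)) :
    CauchySeq (fun n : ℕ => ((x (2 * n), y (2 * n)) : X × X)) ∧
      CauchySeq (fun n : ℕ => ((x (2 * n + 1), y (2 * n + 1)) : X × X)) :=
  stmt8_general A B T φ hφmono hTB hTA hT hAconv hBconv x y hx0 hy0 hx hy
end
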